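/- Let D be a canonical DBM over n clocks with D i i = 0 for all i, and let S ⊆ Fin (n+1) with 0 ∉ S. Then the reset matrix D[S := 0] is again canonical, i.e. it satisfies the triangle inequality; in particular no further Floyd–Warshall canonicalization is needed after a reset. -/

import Mathlib

open scoped Classical

/-- A DBM over `n` clocks: index `0` is the reference clock. -/
abbrev DBM (n : ℕ) := Fin (n + 1) → Fin (n + 1) → WithTop ℝ

/-- A DBM is canonical if it satisfies the triangle inequality. -/
def Canonical {n : ℕ} (D : DBM n) : Prop :=
  ∀ i j k, D i j ≤ D i k + D k j

/-- The reset matrix `D[S := 0]`. -/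
noncomputable def resetDBM {n : ℕ} (D : DBM n) (S : Set (Fin (n + 1))) : DBM n := fun j k =>
  if j ∈ S then (if k ∈ S then 0 else D 0 k)
  else (if k ∈ S then D j 0 else D j k)

/-!
Resetting the clocks of `S` identifies each of them with the reference clock `0`. When
`D 0 0 = 0`, `D[S := 0]` is therefore `D` read through the map sending `S` to `0`,
and the triangle inequality survives any reindexing of rows and columns.
-/

def DBM.reindex {m n : ℕ} (D : DBM n) (f : Fin (m + 1) → Fin (n + 1)) : DBM m :=
  fun j k => D (f j) (f k)

theorem Canonical.reindex {m n : ℕ} {D : DBM n} (hD : Canonical D)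
    (f : Fin (m + 1) → Fin (n + 1)) : Canonical (D.reindex f) :=
  fun i j k => hD (f i) (f j) (f k)

noncomputable def collapseToZero {n : ℕ} (S : Set (Fin (n + 1))) (j : Fin (n + 1)) :
    Fin (n + 1) :=
  if j ∈ S then 0 else j

theorem resetDBM_eq_reindex_collapseToZero {n : ℕ} {D : DBM n} (h00 : D 0 0 = 0)
    (S : Set (Fin (n + 1))) : resetDBM D S = D.reindex (collapseToZero S) := by
  funext j k
  simp only [resetDBM, DBM.reindex, collapseToZero]
  split_ifs <;> simp [h00]

theorem reset_preserves_canonical_general {n : ℕ} (D : DBM n) (hD : Canonical D)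
    (hdiag : ∀ i, D i i = 0)
    (S : Set (Fin (n + 1))) :
    Canonical (resetDBM D S) := by
  rw [resetDBM_eq_reindex_collapseToZero (hdiag 0) S]
  exact hD.reindex (collapseToZero S)

/-- for a canonical DBM with zero diagonal, the reset matrix `D[S := 0]`
is again canonical (no further canonicalization is needed after a reset). -/
theorem reset_preserves_canonical {n : ℕ} (D : DBM n) (hD : Canonical D)
    (hdiag : ∀ i, D i i = 0)
    (S : Set (Fin (n + 1))) (h0 : (0 : Fin (n + 1)) ∉ S) :
    Canonical (resetDBM D S) :=
  reset_preserves_canonical_general D hD hdiag S
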